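/- Let m ≥ 2, d ≥ 1, and let the level-hypervector set {L_1,…,L_m} be generated as follows: L_1 and L_m are independent uniform samples from {0,1}^d, Φ is an independent uniform sample from [0,1]^d, and for 2 ≤ l ≤ m−1 and each coordinate k, L_l(k) = L_1(k) if Φ(k) < (m−l)/(m−1), and L_l(k) = L_m(k) otherwise. Then for all 1 ≤ i < j ≤ m, the expected normalized Hamming distance satisfies E[δ(L_i, L_j)] = (j−i)/(2(m−1)). -/

import Mathlib

open MeasureTheory

/-- Normalized Hamming distance on `{0,1}^d`. -/
noncomputable def hdelta (d : ℕ) (x y : Fin d → Bool) : ℝ :=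
  (Finset.univ.filter fun k => x k ≠ y k).card / d

/-- Sample space: `(L₁, Lₘ)` together with the filter `Φ`. -/
abbrev Omega (d : ℕ) := ((Fin d → Bool) × (Fin d → Bool)) × (Fin d → ℝ)

/-- Uniform measure: `L₁, Lₘ` uniform on `{0,1}^d`, `Φ` uniform on `[0,1]^d`,
all independent. -/
noncomputable def levelMeasure (d : ℕ) : Measure (Omega d) :=
  ((PMF.uniformOfFintype (Fin d → Bool)).toMeasure.prod
    (PMF.uniformOfFintype (Fin d → Bool)).toMeasure).prod
    (Measure.pi fun _ : Fin d => volume.restrict (Set.Icc (0 : ℝ) 1))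

/-- The level-hypervector `L_l` of Algorithm 1:
`L_l(k) = L₁(k)` if `Φ(k) < (m-l)/(m-1)`, else `L_l(k) = Lₘ(k)`. -/
noncomputable def levelHV (d m : ℕ) (l : ℕ) (ω : Omega d) : Fin d → Bool :=
  fun k => if ω.2 k < ((m : ℝ) - l) / ((m : ℝ) - 1) then ω.1.1 k else ω.1.2 k

/-!
Coordinatewise, `L_i(k)` and `L_j(k)` differ exactly when `L₁(k) ≠ Lₘ(k)` and
`Φ(k) ∈ [τ_j, τ_i)`. These two events are independent, of probabilities `1/2` and
`τ_i - τ_j`, so each coordinate disagrees with probability `(j - i) / (2(m - 1))`; by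
linearity of expectation so does the normalized Hamming distance, an average of coordinate
disagreements.
-/

lemma measurableSet_setOf_fst_apply_ne_snd_apply {ι α : Type*} [MeasurableSpace α]
    [MeasurableEq α] (k : ι) : MeasurableSet {p : (ι → α) × (ι → α) | p.1 k ≠ p.2 k} :=
  (measurableSet_eq_fun ((measurable_pi_apply k).comp measurable_fst)
    ((measurable_pi_apply k).comp measurable_snd)).compl

section UniformPi

variable {ι α : Type*} [Fintype ι] [DecidableEq ι] [Fintype α] [DecidableEq α] [Nonempty α]
  [MeasurableSpace α] [MeasurableEq α]

lemma PMF.toMeasure_uniformOfFintype_setOf_apply_eq (k : ι) (a : α) :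
    (PMF.uniformOfFintype (ι → α)).toMeasure {x | x k = a} =
      (Fintype.card α : ENNReal)⁻¹ := by
  rw [PMF.toMeasure_uniformOfFintype_apply {x : ι → α | x k = a}
      (measurableSet_eq_fun (measurable_pi_apply k) measurable_const),
    Fintype.card_subtype, ← Fintype.piFinset_univ]
  simp only [Set.mem_ofPred_eq]
  rw [Fintype.card_filter_piFinset_const_eq_of_mem _ _ (Finset.mem_univ a), Finset.card_univ,
    Fintype.card_pi, Finset.prod_const, Finset.card_univ]
  obtain ⟨n, hn⟩ := Nat.exists_eq_add_one_of_ne_zero (Fintype.card_pos_iff.mpr ⟨k⟩).ne'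
  rw [hn, Nat.add_sub_cancel, pow_succ]
  push_cast
  rw [← one_div, ← ENNReal.mul_div_mul_left 1 _ (c := (Fintype.card α : ENNReal) ^ n) (by simp)
    (by simp), mul_one]

lemma PMF.toMeasure_uniformOfFintype_prod_setOf_apply_ne (k : ι) :
    ((PMF.uniformOfFintype (ι → α)).toMeasure.prod (PMF.uniformOfFintype (ι → α)).toMeasure)
      {p | p.1 k ≠ p.2 k} = 1 - (Fintype.card α : ENNReal)⁻¹ := by
  rw [Measure.prod_apply (measurableSet_setOf_fst_apply_ne_snd_apply k)]
  have hfiber (x : ι → α) : (PMF.uniformOfFintype (ι → α)).toMeasure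
      (Prod.mk x ⁻¹' {p | p.1 k ≠ p.2 k}) = 1 - (Fintype.card α : ENNReal)⁻¹ := by
    rw [← PMF.toMeasure_uniformOfFintype_setOf_apply_eq k (x k), ← prob_compl_eq_one_sub
      (measurableSet_eq_fun (measurable_pi_apply k) measurable_const)]
    congr 1
    ext y
    exact ne_comm
  simp_rw [hfiber, lintegral_const, measure_univ, mul_one]

end UniformPi

instance isProbabilityMeasure_volume_restrict_Icc_zero_one :
    IsProbabilityMeasure (volume.restrict (Set.Icc (0 : ℝ) 1)) :=
  ⟨by simp⟩

lemma Measure.pi_restrict_Icc_zero_one_eval_preimage_Ico {ι : Type*} [Fintype ι] (k : ι)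
    {a b : ℝ} (hb : 0 ≤ b) (ha : a ≤ 1) :
    (Measure.pi fun _ : ι => volume.restrict (Set.Icc (0 : ℝ) 1))
      (Function.eval k ⁻¹' Set.Ico b a) = ENNReal.ofReal (a - b) := by
  rw [(measurePreserving_eval _ k).measure_preimage measurableSet_Ico.nullMeasurableSet,
    Measure.restrict_apply measurableSet_Ico,
    Set.inter_eq_left.mpr (Set.Ico_subset_Icc_self.trans (Set.Icc_subset_Icc hb ha)),
    Real.volume_Ico]

lemma ite_lt_ne_ite_lt_iff {β γ : Type*} [LinearOrder β] {s t u : β} (hts : t ≤ s)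
    {x y : γ} :
    ((if u < s then x else y) ≠ if u < t then x else y) ↔ x ≠ y ∧ u ∈ Set.Ico t s := by
  by_cases hut : u < t
  · simp [hut, hut.trans_le hts]
  · by_cases hus : u < s <;> simp [hut, hus, not_lt.mp hut]

lemma integral_hdelta {Ω : Type*} [MeasurableSpace Ω] {μ : Measure Ω} [IsFiniteMeasure μ]
    {d : ℕ} {X Y : Ω → Fin d → Bool} (h : ∀ k, MeasurableSet {ω | X ω k ≠ Y ω k}) :
    ∫ ω, hdelta d (X ω) (Y ω) ∂μ = (∑ k, μ.real {ω | X ω k ≠ Y ω k}) / d := by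
  have hsum (ω : Ω) :
      hdelta d (X ω) (Y ω) = (∑ k, {ω | X ω k ≠ Y ω k}.indicator 1 ω) / d := by
    simp [hdelta, Finset.card_filter, Set.indicator_apply]
  simp_rw [hsum]
  rw [integral_div, integral_finsetSum _ fun k _ => (integrable_const 1).indicator (h k)]
  simp_rw [integral_indicator_one (h _)]

noncomputable def levelThreshold (m l : ℕ) : ℝ := ((m : ℝ) - l) / ((m : ℝ) - 1)

lemma levelThreshold_antitone {m : ℕ} (hm : 1 < m) : Antitone (levelThreshold m) :=
  fun i j hij => by
    have : (1 : ℝ) < m := by exact_mod_cast hm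
    unfold levelThreshold
    gcongr

lemma levelThreshold_nonneg {m l : ℕ} (hm : 1 < m) (hl : l ≤ m) : 0 ≤ levelThreshold m l := by
  have : (1 : ℝ) < m := by exact_mod_cast hm
  have : (l : ℝ) ≤ m := by exact_mod_cast hl
  exact div_nonneg (by linarith) (by linarith)

lemma levelThreshold_le_one {m l : ℕ} (hm : 1 < m) (hl : 1 ≤ l) : levelThreshold m l ≤ 1 := by
  have : (1 : ℝ) < m := by exact_mod_cast hm
  have : (1 : ℝ) ≤ l := by exact_mod_cast hl
  exact (div_le_one (by linarith)).mpr (by linarith)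

lemma levelThreshold_sub_levelThreshold (m i j : ℕ) :
    levelThreshold m i - levelThreshold m j = ((j : ℝ) - i) / ((m : ℝ) - 1) := by
  rw [levelThreshold, levelThreshold, div_sub_div_same]
  ring_nf

lemma setOf_levelHV_ne_eq_prod {d m i j : ℕ} (hm : 1 < m) (hij : i ≤ j) (k : Fin d) :
    {ω : Omega d | levelHV d m i ω k ≠ levelHV d m j ω k} =
      {p | p.1 k ≠ p.2 k} ×ˢ
        (Function.eval k ⁻¹' Set.Ico (levelThreshold m j) (levelThreshold m i)) := by
  ext ω
  exact ite_lt_ne_ite_lt_iff (levelThreshold_antitone hm hij)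

lemma measurableSet_setOf_levelHV_ne {d m i j : ℕ} (hm : 1 < m) (hij : i ≤ j) (k : Fin d) :
    MeasurableSet {ω : Omega d | levelHV d m i ω k ≠ levelHV d m j ω k} := by
  rw [setOf_levelHV_ne_eq_prod hm hij]
  exact (measurableSet_setOf_fst_apply_ne_snd_apply k).prod
    (measurable_pi_apply k measurableSet_Ico)

lemma levelMeasure_real_setOf_levelHV_ne {d m i j : ℕ} (hm : 1 < m) (hi : 1 ≤ i) (hij : i ≤ j)
    (hj : j ≤ m) (k : Fin d) :
    (levelMeasure d).real {ω | levelHV d m i ω k ≠ levelHV d m j ω k} =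
      (levelThreshold m i - levelThreshold m j) / 2 := by
  rw [measureReal_def, setOf_levelHV_ne_eq_prod hm hij, levelMeasure, Measure.prod_prod,
    PMF.toMeasure_uniformOfFintype_prod_setOf_apply_ne,
    Measure.pi_restrict_Icc_zero_one_eval_preimage_Ico k (levelThreshold_nonneg hm hj)
      (levelThreshold_le_one hm hi)]
  simp [ENNReal.one_sub_inv_two, sub_nonneg.mpr (levelThreshold_antitone hm hij), div_eq_inv_mul]

instance isProbabilityMeasure_levelMeasure (d : ℕ) : IsProbabilityMeasure (levelMeasure d) := by
  unfold levelMeasure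
  infer_instance

theorem expected_distance_levels_general (d m : ℕ) (hd : 1 ≤ d)
    (i j : ℕ) (hi : 1 ≤ i) (hij : i < j) (hj : j ≤ m) :
    ∫ ω, hdelta d (levelHV d m i ω) (levelHV d m j ω) ∂(levelMeasure d)
      = ((j : ℝ) - i) / (2 * ((m : ℝ) - 1)) := by
  have hm : 1 < m := by omega
  rw [integral_hdelta (measurableSet_setOf_levelHV_ne hm hij.le)]
  simp_rw [levelMeasure_real_setOf_levelHV_ne hm hi hij.le hj]
  rw [Finset.sum_const, Finset.card_univ, Fintype.card_fin, nsmul_eq_mul,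
    mul_div_cancel_left₀ _ (by positivity), levelThreshold_sub_levelThreshold, div_div, mul_comm]

theorem expected_distance_levels (d m : ℕ) (hd : 1 ≤ d) (hm : 2 ≤ m)
    (i j : ℕ) (hi : 1 ≤ i) (hij : i < j) (hj : j ≤ m) :
    ∫ ω, hdelta d (levelHV d m i ω) (levelHV d m j ω) ∂(levelMeasure d)
      = ((j : ℝ) - i) / (2 * ((m : ℝ) - 1)) :=
  expected_distance_levels_general d m hd i j hi hij hj
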